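/- arXiv:1606.08303 — 3 statements merged into one kernel-verified Lean document; each statement's English description precedes it below -/
import Mathlib

section
/- The map φ ↦ (d10·sin φ, d20·sin(φ + α)), for φ ∈ [0, 2π), is a bijective parametrization of the ellipse E = {τ ∈ ℝ² : a(τ) = 0}, where a(τ) = ‖τ₂·d10 − τ₁·d20‖² − (d10 ∧ d20)², α is the angle between the vectors d10 = m1 − m0 and d20 = m2 − m0, d10 = ‖d10‖, d20 = ‖d20‖, and it is assumed that d10 ∧ d20 > 0. -/
/-!
Expanding the norm, a(τ) = 0 is the quadratic equation
τ₂² d10² − 2 τ₁ τ₂ d10 d20 cos α + τ₁² d20² = (d10 d20 sin α)². By sin(φ + α) = sin φ cos α +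
cos φ sin α, the map factors as φ ↦ (sin φ, cos φ), a bijection of [0, 2π) onto the unit circle,
followed by the linear map (s, c) ↦ (d10·s, d20·(s cos α + c sin α)); this map is invertible
since d10, d20 and sin α are nonzero, and it carries the unit circle onto the solution set.
-/

open Real Set

theorem Real.bijOn_sin_cos_Ico :
    BijOn (fun φ => (sin φ, cos φ)) (Ico 0 (2 * π)) {p : ℝ × ℝ | p.1 ^ 2 + p.2 ^ 2 = 1} := by
  refine ⟨fun φ _ => sin_sq_add_cos_sq φ, ?_, ?_⟩
  · intro φ hφ ψ hψ h
    obtain ⟨hsin, hcos⟩ := Prod.mk.inj h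
    have hcos_sub : cos (φ - ψ) = 1 := by
      rw [cos_sub, hsin, hcos]
      linear_combination sin_sq_add_cos_sq ψ
    have hsub : φ - ψ = 0 := (cos_eq_one_iff_of_lt_of_lt (by linarith [hφ.1, hψ.2])
      (by linarith [hφ.2, hψ.1])).mp hcos_sub
    linarith
  · rintro ⟨s, c⟩ (hsc : s ^ 2 + c ^ 2 = 1)
    have hc : c ∈ Icc (-1) 1 := ⟨by nlinarith, by nlinarith⟩
    have hsin_arccos : sin (arccos c) = |s| := by
      rw [sin_arccos, show 1 - c ^ 2 = s ^ 2 by linarith, sqrt_sq_eq_abs]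
    rcases le_or_gt 0 s with hs | hs
    · refine ⟨arccos c, ⟨arccos_nonneg c, by linarith [arccos_le_pi c, pi_pos]⟩, ?_⟩
      simp [hsin_arccos, abs_of_nonneg hs, cos_arccos hc.1 hc.2]
    · have hc_lt : c < 1 := by nlinarith
      refine ⟨2 * π - arccos c,
        ⟨by linarith [arccos_le_pi c, pi_pos], by linarith [arccos_pos.2 hc_lt]⟩, ?_⟩
      simp [sin_two_pi_sub, cos_two_pi_sub, hsin_arccos, abs_of_neg hs, cos_arccos hc.1 hc.2]

theorem bijOn_unit_circle_ellipse {D₁ D₂ α : ℝ} (hD₁ : D₁ ≠ 0) (hD₂ : D₂ ≠ 0) (hsin : sin α ≠ 0) :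
    BijOn (fun p : ℝ × ℝ => (D₁ * p.1, D₂ * (p.1 * cos α + p.2 * sin α)))
      {p : ℝ × ℝ | p.1 ^ 2 + p.2 ^ 2 = 1}
      {τ : ℝ × ℝ | τ.2 ^ 2 * D₁ ^ 2 - 2 * τ.1 * τ.2 * (D₁ * D₂ * cos α) + τ.1 ^ 2 * D₂ ^ 2 =
        (D₁ * D₂ * sin α) ^ 2} := by
  let toCircle : ℝ × ℝ → ℝ × ℝ := fun τ => (τ.1 / D₁, (τ.2 / D₂ - τ.1 / D₁ * cos α) / sin α)
  refine InvOn.bijOn (f' := toCircle) ⟨fun p _ => ?_, fun τ _ => ?_⟩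
    (fun p hp => ?_) (fun τ hτ => ?_)
  · ext
    · simp only [toCircle]; field_simp
    · simp only [toCircle]; field_simp; ring
  · ext
    · simp only [toCircle]; field_simp
    · simp only [toCircle]; field_simp; ring
  · simp only [mem_ofPred_eq] at hp ⊢
    linear_combination (D₁ ^ 2 * D₂ ^ 2 * sin α ^ 2) * hp
      - (D₁ ^ 2 * D₂ ^ 2 * p.1 ^ 2) * sin_sq_add_cos_sq α
  · simp only [mem_ofPred_eq, toCircle] at hτ ⊢
    field_simp
    linear_combination hτ + τ.1 ^ 2 * D₂ ^ 2 * sin_sq_add_cos_sq α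

theorem norm_smul_sub_smul_sq_real {F : Type*} [NormedAddCommGroup F] [InnerProductSpace ℝ F]
    (a b : ℝ) (x y : F) :
    ‖a • x - b • y‖ ^ 2 = a ^ 2 * ‖x‖ ^ 2 - 2 * a * b * inner ℝ x y + b ^ 2 * ‖y‖ ^ 2 := by
  rw [norm_sub_sq_real, norm_smul, norm_smul, real_inner_smul_left, real_inner_smul_right,
    mul_pow, mul_pow, norm_eq_abs, norm_eq_abs, sq_abs, sq_abs]
  ring

theorem ellipse_parametrization_general (m0 m1 m2 : EuclideanSpace ℝ (Fin 2)) (α : ℝ)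
    (hα : α ∈ Set.Ioo 0 π)
    (hcos : Real.cos α = (inner ℝ (m1 - m0) (m2 - m0) : ℝ) / (‖m1 - m0‖ * ‖m2 - m0‖))
    (hsin : Real.sin α =
      ((m1 - m0) 0 * (m2 - m0) 1 - (m1 - m0) 1 * (m2 - m0) 0) / (‖m1 - m0‖ * ‖m2 - m0‖)) :
    Set.BijOn (fun φ => (‖m1 - m0‖ * Real.sin φ, ‖m2 - m0‖ * Real.sin (φ + α)))
      (Set.Ico 0 (2 * π))
      {τ : ℝ × ℝ | ‖τ.2 • (m1 - m0) - τ.1 • (m2 - m0)‖ ^ 2 -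
        ((m1 - m0) 0 * (m2 - m0) 1 - (m1 - m0) 1 * (m2 - m0) 0) ^ 2 = 0} := by
  set d₁ := m1 - m0
  set d₂ := m2 - m0
  set cross := d₁ 0 * d₂ 1 - d₁ 1 * d₂ 0
  have hsin_pos : 0 < sin α := sin_pos_of_pos_of_lt_pi hα.1 hα.2
  have hD : ‖d₁‖ * ‖d₂‖ ≠ 0 := by
    intro h
    rw [h, div_zero] at hsin
    exact hsin_pos.ne' hsin
  obtain ⟨hD₁, hD₂⟩ := mul_ne_zero_iff.mp hD
  have hinner : inner ℝ d₁ d₂ = ‖d₁‖ * ‖d₂‖ * cos α := by rw [hcos]; field_simp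
  have hcross : cross = ‖d₁‖ * ‖d₂‖ * sin α := by rw [hsin]; field_simp
  have hellipse : {τ : ℝ × ℝ | ‖τ.2 • d₁ - τ.1 • d₂‖ ^ 2 - cross ^ 2 = 0} =
      {τ : ℝ × ℝ | τ.2 ^ 2 * ‖d₁‖ ^ 2 - 2 * τ.1 * τ.2 * (‖d₁‖ * ‖d₂‖ * cos α) +
        τ.1 ^ 2 * ‖d₂‖ ^ 2 = (‖d₁‖ * ‖d₂‖ * sin α) ^ 2} := by
    ext τ
    simp only [mem_ofPred_eq, norm_smul_sub_smul_sq_real, hinner, hcross]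
    constructor <;> intro h <;> linear_combination h
  rw [hellipse]
  convert (bijOn_unit_circle_ellipse hD₁ hD₂ hsin_pos.ne').comp bijOn_sin_cos_Ico using 1
  funext φ
  simp only [Function.comp_apply, sin_add]

/-- The map φ ↦ (d10 sin φ, d20 sin(φ+α)), φ ∈ [0, 2π), is a bijective
parametrization of the ellipse E = {τ : a(τ) = 0}. -/
theorem ellipse_parametrization (m0 m1 m2 : EuclideanSpace ℝ (Fin 2)) (α : ℝ)
    (hcr : (m1 - m0) 0 * (m2 - m0) 1 - (m1 - m0) 1 * (m2 - m0) 0 > 0)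
    (hα : α ∈ Set.Ioo 0 π)
    (hcos : Real.cos α = (inner ℝ (m1 - m0) (m2 - m0) : ℝ) / (‖m1 - m0‖ * ‖m2 - m0‖))
    (hsin : Real.sin α =
      ((m1 - m0) 0 * (m2 - m0) 1 - (m1 - m0) 1 * (m2 - m0) 0) / (‖m1 - m0‖ * ‖m2 - m0‖)) :
    Set.BijOn (fun φ => (‖m1 - m0‖ * Real.sin φ, ‖m2 - m0‖ * Real.sin (φ + α)))
      (Set.Ico 0 (2 * π))
      {τ : ℝ × ℝ | ‖τ.2 • (m1 - m0) - τ.1 • (m2 - m0)‖ ^ 2 -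
        ((m1 - m0) 0 * (m2 - m0) 1 - (m1 - m0) 1 * (m2 - m0) 0) ^ 2 = 0} :=
  ellipse_parametrization_general m0 m1 m2 α hα hcos hsin
end

section
/- The ellipse E defined by a(τ) = 0 is tangent to each of the six lines supporting the facets of the polytope P2; in particular, every point of E satisfies the (non-strict) triangle inequalities defining P2, i.e., E ⊆ P2. -/
/-! Write `u = m₁ - m₀`, `v = m₂ - m₀` and `G = ‖u‖²‖v‖² - ⟪u, v⟫²` for their Gram determinant,
which in the plane is the squared cross product and is positive for non-collinear points.
For `x = τ₂ u - τ₁ v` and `w = α u + β v` the Gram determinant of `(x, w)` is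
`(α τ₁ + β τ₂)² G`. On `E`, where `‖x‖² = G`, this reads
`G (‖w‖² - (α τ₁ + β τ₂)²) = ⟪x, w⟫²`, so `|α τ₁ + β τ₂| ≤ ‖w‖`, with equality exactly when
`x ⟂ w`; on a line `α τ₁ + β τ₂ = ±‖w‖` this orthogonality is one more linear equation, so the
line meets `E` in a single point. The facets of `P₂` are the cases `w = u, v, v - u`, whose
norms are `d₁₀, d₂₀, d₂₁`. -/

open RealInnerProductSpace

section Gram

variable {V : Type*} [NormedAddCommGroup V] [InnerProductSpace ℝ V]

def gramDet (u v : V) : ℝ := ‖u‖ ^ 2 * ‖v‖ ^ 2 - ⟪u, v⟫ ^ 2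

theorem gramDet_add_smul (u v : V) (a b c d : ℝ) :
    gramDet (a • u + b • v) (c • u + d • v) = (a * d - b * c) ^ 2 * gramDet u v := by
  simp only [gramDet, ← real_inner_self_eq_norm_sq, inner_add_left, inner_add_right,
    real_inner_smul_left, real_inner_smul_right, real_inner_comm u v]
  ring

theorem gramDet_smul_sub_smul (u v : V) (τ₁ τ₂ α β : ℝ) :
    gramDet (τ₂ • u - τ₁ • v) (α • u + β • v) = (α * τ₁ + β * τ₂) ^ 2 * gramDet u v := by
  rw [sub_eq_add_neg, ← neg_smul, gramDet_add_smul]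
  ring

def gramEllipse (u v : V) : Set (ℝ × ℝ) := {τ | ‖τ.2 • u - τ.1 • v‖ ^ 2 = gramDet u v}

variable {u v : V}

theorem abs_linear_le_norm_of_mem_gramEllipse (hG : 0 < gramDet u v) {τ : ℝ × ℝ}
    (hτ : τ ∈ gramEllipse u v) (α β : ℝ) : |α * τ.1 + β * τ.2| ≤ ‖α • u + β • v‖ := by
  have key := gramDet_smul_sub_smul u v τ.1 τ.2 α β
  rw [gramDet, hτ] at key
  have h : gramDet u v * (‖α • u + β • v‖ ^ 2 - (α * τ.1 + β * τ.2) ^ 2) =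
      ⟪τ.2 • u - τ.1 • v, α • u + β • v⟫ ^ 2 := by
    linear_combination key
  have h' := nonneg_of_mul_nonneg_right (h ▸ sq_nonneg _) hG
  exact abs_le_of_sq_le_sq (sub_nonneg.1 h') (norm_nonneg _)

theorem mem_gramEllipse_iff_inner_eq_zero {α β e : ℝ} (he : e ≠ 0)
    (he2 : e ^ 2 = ‖α • u + β • v‖ ^ 2) {τ : ℝ × ℝ} (hτ : α * τ.1 + β * τ.2 = e) :
    τ ∈ gramEllipse u v ↔ ⟪τ.2 • u - τ.1 • v, α • u + β • v⟫ = 0 := by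
  have key := gramDet_smul_sub_smul u v τ.1 τ.2 α β
  rw [gramDet, hτ, ← he2] at key
  change ‖τ.2 • u - τ.1 • v‖ ^ 2 = gramDet u v ↔ _
  constructor
  · intro h
    rw [h] at key
    exact pow_eq_zero_iff two_ne_zero |>.mp (by linear_combination -key)
  · intro h
    rw [h] at key
    have : e ^ 2 * (‖τ.2 • u - τ.1 • v‖ ^ 2 - gramDet u v) = 0 := by linear_combination key
    exact sub_eq_zero.mp ((mul_eq_zero.mp this).resolve_left (pow_ne_zero 2 he))

theorem existsUnique_mem_gramEllipse {α β e : ℝ} (he : e ≠ 0)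
    (he2 : e ^ 2 = ‖α • u + β • v‖ ^ 2) :
    ∃! τ : ℝ × ℝ, τ ∈ gramEllipse u v ∧ α * τ.1 + β * τ.2 = e := by
  set w := α • u + β • v
  have hw : α * ⟪u, w⟫ + β * ⟪v, w⟫ = e ^ 2 := by
    rw [he2, ← real_inner_self_eq_norm_sq]
    simp only [w, inner_add_left, real_inner_smul_left]
  -- solves `α τ₁ + β τ₂ = e`, `τ₂ ⟪u, w⟫ = τ₁ ⟪v, w⟫`, a system of determinant `‖w‖² = e²`
  refine ⟨(⟪u, w⟫ / e, ⟪v, w⟫ / e), ?_, ?_⟩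
  · have hℓ : α * (⟪u, w⟫ / e) + β * (⟪v, w⟫ / e) = e := by
      field_simp
      linear_combination hw
    refine ⟨(mem_gramEllipse_iff_inner_eq_zero he he2 hℓ).2 ?_, hℓ⟩
    simp only [inner_sub_left, real_inner_smul_left]
    ring
  · rintro ⟨τ₁, τ₂⟩ ⟨hτ, hℓ : α * τ₁ + β * τ₂ = e⟩
    have h := (mem_gramEllipse_iff_inner_eq_zero he he2 hℓ).1 hτ
    replace h : τ₂ * ⟪u, w⟫ - τ₁ * ⟪v, w⟫ = 0 := by
      simpa only [inner_sub_left, real_inner_smul_left] using h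
    simp only [Prod.mk.injEq, eq_div_iff he]
    constructor <;> apply mul_left_cancel₀ he
    · linear_combination ⟪u, w⟫ * hℓ - τ₁ * hw - β * h
    · linear_combination ⟪v, w⟫ * hℓ - τ₂ * hw + α * h

end Gram

theorem gramDet_vsub_pos_of_not_collinear {V P : Type*} [NormedAddCommGroup V]
    [InnerProductSpace ℝ V] [MetricSpace P] [NormedAddTorsor V P] {p₀ p₁ p₂ : P}
    (h : ¬ Collinear ℝ ({p₀, p₁, p₂} : Set P)) : 0 < gramDet (p₁ -ᵥ p₀) (p₂ -ᵥ p₀) := by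
  have hsin := EuclideanGeometry.sin_pos_of_not_collinear (p₁ := p₁) (p₂ := p₀) (p₃ := p₂)
    (by rwa [Set.insert_comm])
  have h₁ : p₁ -ᵥ p₀ ≠ 0 := vsub_ne_zero.2 (ne₁₂_of_not_collinear h).symm
  have h₂ : p₂ -ᵥ p₀ ≠ 0 := vsub_ne_zero.2 (ne₁₃_of_not_collinear h).symm
  have hpos := InnerProductGeometry.sin_angle_mul_norm_mul_norm (p₁ -ᵥ p₀) (p₂ -ᵥ p₀)
  rw [← EuclideanGeometry.angle] at hpos
  have : 0 < √(_) := hpos ▸ mul_pos hsin (mul_pos (norm_pos_iff.2 h₁) (norm_pos_iff.2 h₂))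
  rw [Real.sqrt_pos, real_inner_self_eq_norm_sq, real_inner_self_eq_norm_sq] at this
  simpa [gramDet, sq] using this

theorem sq_cross_eq_gramDet (u v : EuclideanSpace ℝ (Fin 2)) :
    (u 0 * v 1 - u 1 * v 0) ^ 2 = gramDet u v := by
  simp only [gramDet, EuclideanSpace.norm_sq_eq, PiLp.inner_apply, Fin.sum_univ_two,
    Real.norm_eq_abs, sq_abs, RCLike.inner_apply, conj_trivial]
  ring

/-- The ellipse E is inscribed in the polytope P2 (E ⊆ P2) and is tangent to
each of the six lines supporting the facets of P2, tangency being expressed as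
a unique intersection point with each supporting line. -/
theorem ellipse_inscribed_in_polytope (m0 m1 m2 : EuclideanSpace ℝ (Fin 2))
    (h : ¬ Collinear ℝ ({m0, m1, m2} : Set (EuclideanSpace ℝ (Fin 2)))) :
    let E : Set (ℝ × ℝ) := {τ | ‖τ.2 • (m1 - m0) - τ.1 • (m2 - m0)‖ ^ 2 =
      ((m1 - m0) 0 * (m2 - m0) 1 - (m1 - m0) 1 * (m2 - m0) 0) ^ 2}
    let P2 : Set (ℝ × ℝ) := {τ | |τ.1| ≤ dist m0 m1 ∧ |τ.2| ≤ dist m0 m2 ∧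
      |τ.2 - τ.1| ≤ dist m1 m2}
    E ⊆ P2 ∧
    (∃! τ : ℝ × ℝ, τ ∈ E ∧ τ.1 = dist m0 m1) ∧
    (∃! τ : ℝ × ℝ, τ ∈ E ∧ τ.1 = -dist m0 m1) ∧
    (∃! τ : ℝ × ℝ, τ ∈ E ∧ τ.2 = dist m0 m2) ∧
    (∃! τ : ℝ × ℝ, τ ∈ E ∧ τ.2 = -dist m0 m2) ∧
    (∃! τ : ℝ × ℝ, τ ∈ E ∧ τ.2 - τ.1 = dist m1 m2) ∧
    (∃! τ : ℝ × ℝ, τ ∈ E ∧ τ.2 - τ.1 = -dist m1 m2) := by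
  intro E P2
  have hE : E = gramEllipse (m1 - m0) (m2 - m0) := by
    simp only [E, gramEllipse, sq_cross_eq_gramDet]
  have hG : 0 < gramDet (m1 - m0) (m2 - m0) := gramDet_vsub_pos_of_not_collinear h
  have hdist10 : dist m0 m1 = ‖(1 : ℝ) • (m1 - m0) + (0 : ℝ) • (m2 - m0)‖ := by
    simp [dist_eq_norm']
  have hdist20 : dist m0 m2 = ‖(0 : ℝ) • (m1 - m0) + (1 : ℝ) • (m2 - m0)‖ := by
    simp [dist_eq_norm']
  have hdist21 : dist m1 m2 = ‖(-1 : ℝ) • (m1 - m0) + (1 : ℝ) • (m2 - m0)‖ := by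
    rw [dist_eq_norm']; congr 1; module
  have tangent (α β e d : ℝ) (hd : d = ‖α • (m1 - m0) + β • (m2 - m0)‖) (hd0 : 0 < d)
      (he : e ^ 2 = d ^ 2) :
      ∃! τ : ℝ × ℝ, τ ∈ gramEllipse (m1 - m0) (m2 - m0) ∧ α * τ.1 + β * τ.2 = e :=
    existsUnique_mem_gramEllipse (by rintro rfl; nlinarith) (hd ▸ he)
  have hpos10 := dist_pos.2 (ne₁₂_of_not_collinear h)
  have hpos20 := dist_pos.2 (ne₁₃_of_not_collinear h)
  have hpos21 := dist_pos.2 (ne₂₃_of_not_collinear h)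
  rw [hE]
  refine ⟨fun τ hτ => ⟨?_, ?_, ?_⟩, ?_, ?_, ?_, ?_, ?_, ?_⟩
  · simpa [hdist10] using abs_linear_le_norm_of_mem_gramEllipse hG hτ 1 0
  · simpa [hdist20] using abs_linear_le_norm_of_mem_gramEllipse hG hτ 0 1
  · simpa [hdist21, neg_add_eq_sub] using abs_linear_le_norm_of_mem_gramEllipse hG hτ (-1) 1
  · simpa using tangent 1 0 _ _ hdist10 hpos10 rfl
  · simpa using tangent 1 0 (-dist m0 m1) _ hdist10 hpos10 (neg_sq _)
  · simpa using tangent 0 1 _ _ hdist20 hpos20 rfl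
  · simpa using tangent 0 1 (-dist m0 m2) _ hdist20 hpos20 (neg_sq _)
  · simpa [neg_add_eq_sub] using tangent (-1) 1 _ _ hdist21 hpos21 rfl
  · simpa [neg_add_eq_sub] using tangent (-1) 1 (-dist m1 m2) _ hdist21 hpos21 (neg_sq _)
end

section
/- Let the four open subsets Ω, Ω0, Ω1, Ω2 of ℝ² be defined via the signs of the cross products of the normalized displacement vectors di(x) = x − mi as in the text: Ω = {x : (d̃1∧d̃0 − d̃2∧d̃0 + d̃2∧d̃1)(x) < 0}, Ω0 = {x : (d1∧d0)(x) > 0 and (d2∧d0)(x) < 0}, Ω1 = {x : (d1∧d0)(x) > 0 and (d2∧d1)(x) > 0}, Ω2 = {x : (d2∧d0)(x) < 0 and (d2∧d1)(x) > 0}. Then these four sets are pairwise disjoint. -/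
/-!
Write a = x - m0, b = x - m1, c = x - m2. Each of Ω0, Ω1, Ω2 asks two of the three wedges
a ∧ b, b ∧ c, c ∧ a to be negative, while their sum is the constant (m1 - m0) ∧ (m2 - m0) > 0
(twice the signed area of the triangle m0 m1 m2); so two of the Ωi cannot meet. Ω asks the same
cyclic sum to be positive for the unit directions u, v, w of a, b, c. Lagrange's identity
‖u‖² (v ∧ w) = (v ∧ u) ⟪w, u⟫ + (u ∧ w) ⟪v, u⟫ turns that sum into
(u ∧ v) (1 - ⟪w, u⟫) + (w ∧ u) (1 - ⟪v, u⟫), which is ≤ 0 as soon as u ∧ v ≤ 0 and w ∧ u ≤ 0.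
Hence on Ω at most one of the three wedges is nonpositive, and Ω misses every Ωi.
-/

open scoped RealInnerProductSpace

local notation "ℝ²" => EuclideanSpace ℝ (Fin 2)

def wedge (u v : ℝ²) : ℝ := u 0 * v 1 - u 1 * v 0

def cyclicWedge (u v w : ℝ²) : ℝ := wedge u v + wedge v w + wedge w u

theorem wedge_swap (u v : ℝ²) : wedge v u = -wedge u v := by
  unfold wedge; ring

theorem wedge_smul_smul (r s : ℝ) (u v : ℝ²) : wedge (r • u) (s • v) = r * s * wedge u v := by
  simp only [wedge, PiLp.smul_apply, smul_eq_mul]; ring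

theorem norm_sq_mul_wedge (u v w : ℝ²) :
    ‖u‖ ^ 2 * wedge v w = wedge v u * ⟪w, u⟫ + wedge u w * ⟪v, u⟫ := by
  rw [← real_inner_self_eq_norm_sq]
  simp only [wedge, PiLp.inner_apply, Fin.sum_univ_two, RCLike.inner_apply, conj_trivial]
  ring

theorem cyclicWedge_rotate (u v w : ℝ²) : cyclicWedge v w u = cyclicWedge u v w := by
  unfold cyclicWedge; ring

theorem cyclicWedge_sub_left (x a b c : ℝ²) :
    cyclicWedge (x - a) (x - b) (x - c) = wedge (b - a) (c - a) := by
  simp only [cyclicWedge, wedge, PiLp.sub_apply]; ring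

theorem cyclicWedge_nonpos_of_wedge_nonpos {u v w : ℝ²} (hu : ‖u‖ = 1) (hv : ‖v‖ ≤ 1)
    (hw : ‖w‖ ≤ 1) (huv : wedge u v ≤ 0) (hwu : wedge w u ≤ 0) : cyclicWedge u v w ≤ 0 := by
  have hvu_le : ⟪v, u⟫ ≤ 1 := (real_inner_le_norm v u).trans (by rwa [hu, mul_one])
  have hwu_le : ⟪w, u⟫ ≤ 1 := (real_inner_le_norm w u).trans (by rwa [hu, mul_one])
  have lagrange := norm_sq_mul_wedge u v w
  rw [hu, wedge_swap u v, wedge_swap w u] at lagrange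
  have h : cyclicWedge u v w = wedge u v * (1 - ⟪w, u⟫) + wedge w u * (1 - ⟪v, u⟫) := by
    unfold cyclicWedge
    linear_combination lagrange
  rw [h]
  exact add_nonpos (mul_nonpos_of_nonpos_of_nonneg huv (by linarith))
    (mul_nonpos_of_nonpos_of_nonneg hwu (by linarith))

theorem wedge_pos_or_wedge_pos_of_cyclicWedge_pos {a b c : ℝ²} (ha : a ≠ 0) (hb : b ≠ 0)
    (hc : c ≠ 0) (h : 0 < cyclicWedge (‖a‖⁻¹ • a) (‖b‖⁻¹ • b) (‖c‖⁻¹ • c)) :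
    0 < wedge a b ∨ 0 < wedge c a := by
  by_contra! hneg
  obtain ⟨hab, hca⟩ := hneg
  refine h.not_ge (cyclicWedge_nonpos_of_wedge_nonpos (norm_smul_inv_norm ha)
    (norm_smul_inv_norm hb).le (norm_smul_inv_norm hc).le ?_ ?_)
  · rw [wedge_smul_smul]; exact mul_nonpos_of_nonneg_of_nonpos (by positivity) hab
  · rw [wedge_smul_smul]; exact mul_nonpos_of_nonneg_of_nonpos (by positivity) hca

/-- The four regions Ω, Ω0, Ω1, Ω2 are pairwise disjoint. -/
theorem regions_pairwise_disjoint (m0 m1 m2 : EuclideanSpace ℝ (Fin 2))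
    (hcr : (m1 - m0) 0 * (m2 - m0) 1 - (m1 - m0) 1 * (m2 - m0) 0 > 0) :
    let cross : EuclideanSpace ℝ (Fin 2) → EuclideanSpace ℝ (Fin 2) → ℝ :=
      fun u v => u 0 * v 1 - u 1 * v 0
    let d : EuclideanSpace ℝ (Fin 2) → EuclideanSpace ℝ (Fin 2) → EuclideanSpace ℝ (Fin 2) :=
      fun m x => x - m
    let nd : EuclideanSpace ℝ (Fin 2) → EuclideanSpace ℝ (Fin 2) → EuclideanSpace ℝ (Fin 2) :=
      fun m x => ‖x - m‖⁻¹ • (x - m)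
    let S : Set (EuclideanSpace ℝ (Fin 2)) := {x | x ≠ m0 ∧ x ≠ m1 ∧ x ≠ m2}
    let Ω : Set (EuclideanSpace ℝ (Fin 2)) := {x ∈ S |
      cross (nd m1 x) (nd m0 x) - cross (nd m2 x) (nd m0 x) + cross (nd m2 x) (nd m1 x) < 0}
    let Ω0 : Set (EuclideanSpace ℝ (Fin 2)) := {x ∈ S |
      cross (d m1 x) (d m0 x) > 0 ∧ cross (d m2 x) (d m0 x) < 0}
    let Ω1 : Set (EuclideanSpace ℝ (Fin 2)) := {x ∈ S |
      cross (d m1 x) (d m0 x) > 0 ∧ cross (d m2 x) (d m1 x) > 0}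
    let Ω2 : Set (EuclideanSpace ℝ (Fin 2)) := {x ∈ S |
      cross (d m2 x) (d m0 x) < 0 ∧ cross (d m2 x) (d m1 x) > 0}
    Disjoint Ω Ω0 ∧ Disjoint Ω Ω1 ∧ Disjoint Ω Ω2 ∧
    Disjoint Ω0 Ω1 ∧ Disjoint Ω0 Ω2 ∧ Disjoint Ω1 Ω2 := by
  intro cross d nd S Ω Ω0 Ω1 Ω2
  have swap (u v) : cross v u = -cross u v := wedge_swap u v
  have hsum (x) :
      0 < cross (d m0 x) (d m1 x) + cross (d m1 x) (d m2 x) + cross (d m2 x) (d m0 x) :=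
    hcr.trans_eq (cyclicWedge_sub_left x m0 m1 m2).symm
  have hΩ : ∀ x ∈ Ω,
      (0 < cross (d m0 x) (d m1 x) ∨ 0 < cross (d m2 x) (d m0 x)) ∧
      (0 < cross (d m1 x) (d m2 x) ∨ 0 < cross (d m0 x) (d m1 x)) ∧
      (0 < cross (d m2 x) (d m0 x) ∨ 0 < cross (d m1 x) (d m2 x)) := by
    rintro x ⟨⟨h0, h1, h2⟩, hx⟩
    have ha : x - m0 ≠ 0 := sub_ne_zero.2 h0
    have hb : x - m1 ≠ 0 := sub_ne_zero.2 h1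
    have hc : x - m2 ≠ 0 := sub_ne_zero.2 h2
    have hpos : 0 < cyclicWedge (nd m0 x) (nd m1 x) (nd m2 x) :=
      show 0 < cross (nd m0 x) (nd m1 x) + cross (nd m1 x) (nd m2 x) + cross (nd m2 x) (nd m0 x)
      by linarith [swap (nd m0 x) (nd m1 x), swap (nd m1 x) (nd m2 x)]
    refine ⟨wedge_pos_or_wedge_pos_of_cyclicWedge_pos ha hb hc hpos,
      wedge_pos_or_wedge_pos_of_cyclicWedge_pos hb hc ha ?_,
      wedge_pos_or_wedge_pos_of_cyclicWedge_pos hc ha hb ?_⟩ <;>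
    simpa only [cyclicWedge_rotate] using hpos
  refine ⟨?_, ?_, ?_, ?_, ?_, ?_⟩ <;> refine Set.disjoint_left.2 fun x hx hx' => ?_ <;>
    have hab := swap (d m0 x) (d m1 x) <;> have hbc := swap (d m1 x) (d m2 x)
  · rcases (hΩ x hx).1 with h | h <;> linarith [hx'.2.1, hx'.2.2]
  · rcases (hΩ x hx).2.1 with h | h <;> linarith [hx'.2.1, hx'.2.2]
  · rcases (hΩ x hx).2.2 with h | h <;> linarith [hx'.2.1, hx'.2.2]
  · linarith [hsum x, hx.2.1, hx.2.2, hx'.2.2]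
  · linarith [hsum x, hx.2.1, hx.2.2, hx'.2.2]
  · linarith [hsum x, hx.2.1, hx.2.2, hx'.2.1]
end
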